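/- arXiv:1808.01008 — 2 statements merged into one kernel-verified Lean document; each statement's English description precedes it below -/
import Mathlib

section
/- Let F be the formal power series over ℚ whose n-th coefficient is C(n, n−1) for n ≥ 1 and is 0 for n = 0. Then (1 − 2x)·F = x. -/
open scoped Classical

/-- Vertices `j` and `k` of `{1,…,n}` (encoded as `Fin n`, vertex `v` is `v+1`) are joined by
an edge determined by the composition `a`. -/
def CompEdge {n : ℕ} (a : Composition n) (j k : Fin n) : Prop :=
  j ≠ k ∧ ∃ i : Fin a.length,
    a.sizeUpTo i < (j : ℕ) + 1 ∧ (j : ℕ) + 1 ≤ a.sizeUpTo (i + 1) ∧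
    a.sizeUpTo i < (k : ℕ) + 1 ∧ (k : ℕ) + 1 ≤ a.sizeUpTo (i + 1) ∧
    ((j : ℕ) + 1) + ((k : ℕ) + 1) = 2 * a.sizeUpTo i + a.blocksFun i + 1

lemma CompEdge.symm {n : ℕ} {a : Composition n} {j k : Fin n} (h : CompEdge a j k) :
    CompEdge a k j := by
  obtain ⟨hne, i, h1, h2, h3, h4, h5⟩ := h
  exact ⟨hne.symm, i, h3, h4, h1, h2, by omega⟩

/-- The meander `M(a|b)` of the pair of compositions `(a, b)` of `n`. -/
def Meander {n : ℕ} (a b : Composition n) : SimpleGraph (Fin n) where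
  Adj j k := CompEdge a j k ∨ CompEdge b j k
  symm := by
    constructor
    intro j k h
    rcases h with h | h
    · exact Or.inl h.symm
    · exact Or.inr h.symm
  loopless := by
    constructor
    intro j h
    rcases h with ⟨hne, _⟩ | ⟨hne, _⟩ <;> exact hne rfl

/-- A connected component of the meander is a cycle if each of its vertices is incident
to both a top edge and a bottom edge. -/
def IsCycleComp {n : ℕ} (a b : Composition n) (c : (Meander a b).ConnectedComponent) : Prop :=
  ∀ v : Fin n, (Meander a b).connectedComponentMk v = c →
    (∃ w, CompEdge a v w) ∧ (∃ w, CompEdge b v w)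

/-- The number of cycle components of the meander `M(a|b)`. -/
noncomputable def cycleCount {n : ℕ} (a b : Composition n) : ℕ :=
  Nat.card {c : (Meander a b).ConnectedComponent // IsCycleComp a b c}

/-- The number of path components of the meander `M(a|b)`. -/
noncomputable def pathCount {n : ℕ} (a b : Composition n) : ℕ :=
  Nat.card {c : (Meander a b).ConnectedComponent // ¬ IsCycleComp a b c}

/-- The index `ind(a,b) = 2C + P - 1` of a pair of compositions of `n`. -/
noncomputable def seaweedInd {n : ℕ} (a b : Composition n) : ℕ :=
  2 * cycleCount a b + pathCount a b - 1

/-- `C(n,k)`: the number of ordered pairs of compositions of `n` of index `k`. -/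
noncomputable def Cnk (n k : ℕ) : ℕ :=
  Nat.card {p : Composition n × Composition n // seaweedInd p.1 p.2 = k}

/-! Every cycle component of `M(a|b)` has at least two vertices, so `2C + P ≤ n`, with equality
exactly when every component is an isolated vertex or a single top arc doubled by the same bottom
arc, i.e. when `a` and `b` have the same arcs. A composition is determined by its arcs: a cut point
is a block boundary iff no arc passes over it. Hence `C(n, n-1)` counts the diagonal pairs `(a, a)`,
which gives `2^(n-1)` and the generating function `x / (1 - 2x)`. -/

namespace SimpleGraph

variable {V : Type*} {G : SimpleGraph V}

theorem ConnectedComponent.supp_subset_of_adj_closed {S : Set V} {v : V} (hv : v ∈ S)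
    (hS : ∀ x ∈ S, ∀ y, G.Adj x y → y ∈ S) : (G.connectedComponentMk v).supp ⊆ S := by
  intro u hu
  obtain ⟨p⟩ := ConnectedComponent.exact hu.symm
  clear hu
  induction p with
  | nil => exact hv
  | cons hadj _ ih => exact ih (hS _ hv _ hadj)

theorem supp_connectedComponentMk_eq_pair (hG : ∀ x y z, G.Adj x y → G.Adj x z → y = z)
    {v w : V} (hvw : G.Adj v w) : (G.connectedComponentMk v).supp = {v, w} := by
  refine subset_antisymm (ConnectedComponent.supp_subset_of_adj_closed (by simp) ?_) ?_
  · rintro x (rfl | rfl) y hxy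
    · exact Or.inr (hG _ _ _ hxy hvw)
    · exact Or.inl (hG _ _ _ hxy hvw.symm)
  · rintro x (rfl | rfl)
    · rfl
    · exact ConnectedComponent.connectedComponentMk_eq_of_adj hvw.symm

theorem supp_connectedComponentMk_eq_singleton {v : V} (hv : ∀ w, ¬G.Adj v w) :
    (G.connectedComponentMk v).supp = {v} := by
  refine subset_antisymm (ConnectedComponent.supp_subset_of_adj_closed rfl ?_) (by simp)
  rintro x rfl y hxy
  exact absurd hxy (hv y)

theorem two_le_natCard_supp_of_adj [Finite V] {v w : V} (hvw : G.Adj v w) :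
    2 ≤ Nat.card (G.connectedComponentMk v).supp := by
  rw [Nat.card_coe_set_eq, ← Set.ncard_pair (G.ne_of_adj hvw)]
  refine Set.ncard_le_ncard ?_
  rintro x (rfl | rfl)
  · rfl
  · exact ConnectedComponent.connectedComponentMk_eq_of_adj hvw.symm

theorem eq_of_adj_of_adj_of_natCard_supp_le_two [Finite V] {v w w' : V} (hw : G.Adj v w)
    (hw' : G.Adj v w') (hv : Nat.card (G.connectedComponentMk v).supp ≤ 2) : w = w' := by
  by_contra hne
  have hsub : ({v, w, w'} : Set V) ⊆ (G.connectedComponentMk v).supp := by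
    rintro x (rfl | rfl | rfl)
    · rfl
    · exact ConnectedComponent.connectedComponentMk_eq_of_adj hw.symm
    · exact ConnectedComponent.connectedComponentMk_eq_of_adj hw'.symm
  have h3 : ({v, w, w'} : Set V).ncard = 3 :=
    Set.ncard_eq_three.mpr ⟨v, w, w', G.ne_of_adj hw, G.ne_of_adj hw', hne, rfl⟩
  have := Set.ncard_le_ncard hsub
  rw [Nat.card_coe_set_eq] at hv
  omega

section Counting

variable [Fintype V] (P : G.ConnectedComponent → Prop)

theorem natCard_eq_sum_natCard_supp (G : SimpleGraph V) :
    Nat.card V = ∑ c : G.ConnectedComponent, Nat.card c.supp :=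
  (Nat.card_congr (Equiv.sigmaFiberEquiv G.connectedComponentMk).symm).trans Nat.card_sigma

theorem two_mul_natCard_add_natCard_eq_sum :
    2 * Nat.card {c // P c} + Nat.card {c // ¬P c} = ∑ c, if P c then 2 else 1 := by
  simp only [Nat.card_eq_fintype_card, Fintype.card_subtype, Finset.sum_ite, Finset.sum_const,
    smul_eq_mul]
  ring

theorem two_mul_natCard_add_natCard_pos [Nonempty V] :
    0 < 2 * Nat.card {c // P c} + Nat.card {c // ¬P c} := by
  rw [two_mul_natCard_add_natCard_eq_sum]
  exact Finset.sum_pos (fun c _ => by split_ifs <;> omega) Finset.univ_nonempty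

theorem two_mul_natCard_add_natCard_eq_iff (hP : ∀ c, P c → 2 ≤ Nat.card c.supp) :
    2 * Nat.card {c // P c} + Nat.card {c // ¬P c} = Nat.card V ↔
      ∀ c, Nat.card c.supp = if P c then 2 else 1 := by
  have hle : ∀ c ∈ Finset.univ, (if P c then 2 else 1) ≤ Nat.card c.supp := by
    intro c _
    split_ifs with hc
    · exact hP c hc
    · have := c.nonempty_supp.to_subtype
      exact Nat.card_pos
  rw [two_mul_natCard_add_natCard_eq_sum, natCard_eq_sum_natCard_supp G,
    Finset.sum_eq_sum_iff_of_le hle]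
  simp only [Finset.mem_univ, true_implies, eq_comm]

end Counting

end SimpleGraph

namespace Composition

variable {n : ℕ} (a : Composition n)

theorem eq_of_mem_Ico_sizeUpTo {i i' m : ℕ} (h : m ∈ Set.Ico (a.sizeUpTo i) (a.sizeUpTo (i + 1)))
    (h' : m ∈ Set.Ico (a.sizeUpTo i') (a.sizeUpTo (i' + 1))) : i = i' := by
  obtain ⟨h1, h2⟩ := h
  obtain ⟨h1', h2'⟩ := h'
  by_contra hne
  rcases Nat.lt_or_gt_of_ne hne with hlt | hlt
  · have := a.monotone_sizeUpTo (show i + 1 ≤ i' from hlt)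
    omega
  · have := a.monotone_sizeUpTo (show i' + 1 ≤ i from hlt)
    omega

theorem mem_boundaries_iff_exists_sizeUpTo (m : Fin (n + 1)) :
    m ∈ a.boundaries ↔ ∃ i : Fin (a.length + 1), a.sizeUpTo i = m := by
  simp [boundaries, boundary, Fin.ext_iff]

/-- The cut point `m` lies between vertices `m` and `m + 1` (numbered from `1`). Inside a block
the outermost arc joins its first and last vertex, so it passes over every interior cut. -/
theorem mem_boundaries_iff_forall_compEdge (m : Fin (n + 1)) :
    m ∈ a.boundaries ↔ ∀ j k : Fin n, CompEdge a j k → ¬((j : ℕ) < m ∧ (m : ℕ) ≤ k) := by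
  rw [mem_boundaries_iff_exists_sizeUpTo]
  constructor
  · rintro ⟨i, hi⟩ j k ⟨-, i', h1, h2, h3, h4, -⟩ ⟨hj, hk⟩
    rcases le_or_gt (i : ℕ) i' with hle | hlt
    · have := a.monotone_sizeUpTo hle
      omega
    · have := a.monotone_sizeUpTo (show (i' : ℕ) + 1 ≤ i from hlt)
      omega
  · contrapose!
    intro hcut
    have hm : (m : ℕ) < n := by
      refine lt_of_le_of_ne (Nat.lt_succ_iff.mp m.2) fun h => hcut (Fin.last _) ?_
      simp [h, sizeUpTo_length]
    set i := a.index ⟨m, hm⟩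
    have hlo : a.sizeUpTo i < m := lt_of_le_of_ne (a.sizeUpTo_index_le ⟨m, hm⟩) (hcut i.castSucc)
    have hhi : m < a.sizeUpTo (i + 1) := a.lt_sizeUpTo_index_succ ⟨m, hm⟩
    have hsucc := a.sizeUpTo_succ' i
    have hle := a.sizeUpTo_le (i + 1)
    refine ⟨⟨a.sizeUpTo i, by omega⟩, ⟨a.sizeUpTo (i + 1) - 1, by omega⟩, ⟨?_, i, ?_⟩, ?_⟩ <;>
      simp only [ne_eq, Fin.ext_iff] <;> omega

theorem eq_of_compEdge_iff {a b : Composition n} (h : ∀ j k, CompEdge a j k ↔ CompEdge b j k) :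
    a = b :=
  (compositionEquiv n).injective <| CompositionAsSet.ext <| Finset.ext fun m => by
    simp only [compositionEquiv, Equiv.coe_fn_mk, toCompositionAsSet_boundaries,
      mem_boundaries_iff_forall_compEdge, h]

end Composition

theorem CompEdge.unique {n : ℕ} {a : Composition n} {j k k' : Fin n} (h : CompEdge a j k)
    (h' : CompEdge a j k') : k = k' := by
  obtain ⟨-, i, h1, h2, -, -, h5⟩ := h
  obtain ⟨-, i', h1', h2', -, -, h5'⟩ := h'
  obtain rfl : i = i' :=
    Fin.ext (a.eq_of_mem_Ico_sizeUpTo (m := j) ⟨by omega, by omega⟩ ⟨by omega, by omega⟩)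
  exact Fin.ext (by omega)

section Meander

variable {n : ℕ}

theorem IsCycleComp.two_le_natCard_supp {a b : Composition n}
    {c : (Meander a b).ConnectedComponent} (hc : IsCycleComp a b c) : 2 ≤ Nat.card c.supp := by
  obtain ⟨v, rfl⟩ := c.exists_rep
  obtain ⟨⟨w, hw⟩, -⟩ := hc v rfl
  exact SimpleGraph.two_le_natCard_supp_of_adj (Or.inl hw)

theorem compEdge_iff_of_natCard_supp_eq {a b : Composition n}
    (h : ∀ c : (Meander a b).ConnectedComponent,
      Nat.card c.supp = if IsCycleComp a b c then 2 else 1) (j k : Fin n) :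
    CompEdge a j k ↔ CompEdge b j k := by
  have hcyc : ∀ {k}, (Meander a b).Adj j k →
      IsCycleComp a b ((Meander a b).connectedComponentMk j) := by
    intro k hjk
    by_contra hc
    have := SimpleGraph.two_le_natCard_supp_of_adj hjk
    rw [h, if_neg hc] at this
    omega
  have huniq : ∀ {k w}, (Meander a b).Adj j k → (Meander a b).Adj j w → k = w := fun hk hw =>
    SimpleGraph.eq_of_adj_of_adj_of_natCard_supp_le_two hk hw (by rw [h, if_pos (hcyc hk)])
  constructor
  · intro hk
    obtain ⟨-, w, hw⟩ := hcyc (Or.inl hk) j rfl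
    rwa [huniq (Or.inl hk) (Or.inr hw)]
  · intro hk
    obtain ⟨⟨w, hw⟩, -⟩ := hcyc (Or.inr hk) j rfl
    rwa [huniq (Or.inr hk) (Or.inl hw)]

theorem natCard_supp_meander_self (a : Composition n) (c : (Meander a a).ConnectedComponent) :
    Nat.card c.supp = if IsCycleComp a a c then 2 else 1 := by
  have hadj : ∀ j k, (Meander a a).Adj j k ↔ CompEdge a j k := fun j k => or_self_iff
  induction c using SimpleGraph.ConnectedComponent.ind with | h v => ?_
  by_cases hv : ∃ w, CompEdge a v w
  · obtain ⟨w, hw⟩ := hv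
    have hsupp := SimpleGraph.supp_connectedComponentMk_eq_pair
      (fun x y z hy hz => ((hadj x y).1 hy).unique ((hadj x z).1 hz)) ((hadj v w).2 hw)
    have hc : IsCycleComp a a ((Meander a a).connectedComponentMk v) := by
      intro u hu
      rcases (hsupp ▸ hu : u ∈ ({v, w} : Set (Fin n))) with rfl | rfl
      · exact ⟨⟨w, hw⟩, ⟨w, hw⟩⟩
      · exact ⟨⟨_, hw.symm⟩, ⟨_, hw.symm⟩⟩
    rw [if_pos hc, hsupp, Nat.card_coe_set_eq, Set.ncard_pair hw.1]
  · have hsupp := SimpleGraph.supp_connectedComponentMk_eq_singleton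
      (fun w h => hv ⟨w, (hadj v w).1 h⟩)
    have hc : ¬IsCycleComp a a ((Meander a a).connectedComponentMk v) :=
      fun hc => hv (hc v rfl).1
    rw [if_neg hc, hsupp, Nat.card_coe_set_eq, Set.ncard_singleton]

theorem seaweedInd_eq_sub_one_iff (hn : n ≠ 0) (a b : Composition n) :
    seaweedInd a b = n - 1 ↔ a = b := by
  have : Nonempty (Fin n) := ⟨⟨0, Nat.pos_of_ne_zero hn⟩⟩
  have hpos := SimpleGraph.two_mul_natCard_add_natCard_pos (IsCycleComp a b)
  have hcount := SimpleGraph.two_mul_natCard_add_natCard_eq_iff (IsCycleComp a b)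
    fun _ hc => hc.two_le_natCard_supp
  rw [Nat.card_fin] at hcount
  rw [seaweedInd, cycleCount, pathCount]
  constructor
  · intro h
    exact Composition.eq_of_compEdge_iff
      (compEdge_iff_of_natCard_supp_eq (hcount.1 (by omega)))
  · rintro rfl
    have := hcount.2 (natCard_supp_meander_self a)
    omega

end Meander

theorem Nat.card_subtype_fst_eq_snd (α : Type*) :
    Nat.card {p : α × α // p.1 = p.2} = Nat.card α :=
  Nat.card_congr
    { toFun := fun p => p.1.1
      invFun := fun x => ⟨(x, x), rfl⟩
      left_inv := fun ⟨(x, y), (h : x = y)⟩ => by subst h; rfl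
      right_inv := fun _ => rfl }

theorem Cnk_self_sub_one {n : ℕ} (hn : n ≠ 0) : Cnk n (n - 1) = 2 ^ (n - 1) := by
  rw [Cnk, ← composition_card, ← Nat.card_eq_fintype_card,
    ← Nat.card_subtype_fst_eq_snd (Composition n)]
  exact Nat.card_congr (Equiv.subtypeEquivRight fun p => seaweedInd_eq_sub_one_iff hn p.1 p.2)

theorem PowerSeries.one_sub_C_mul_X_mul_mk_pow {R : Type*} [CommRing R] (a : R) :
    (1 - C a * X) * mk (a ^ ·) = 1 := by
  have := congrArg (rescale a) (mk_one_mul_one_sub_eq_one (S := R))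
  rw [map_mul, rescale_mk, map_sub, map_one, rescale_X] at this
  simpa only [Pi.one_apply, mul_one, mul_comm] using this

theorem genfun_C_n_nsub1 :
    (1 - 2 * PowerSeries.X) *
      PowerSeries.mk (fun n => if 1 ≤ n then ((Cnk n (n - 1) : ℚ)) else 0) =
    (PowerSeries.X : PowerSeries ℚ) := by
  have hF : PowerSeries.mk (fun n => if 1 ≤ n then ((Cnk n (n - 1) : ℚ)) else 0) =
      PowerSeries.X * PowerSeries.mk ((2 : ℚ) ^ ·) := by
    ext (_ | n)
    · simp
    · rw [PowerSeries.coeff_succ_X_mul, PowerSeries.coeff_mk, PowerSeries.coeff_mk,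
        if_pos (Nat.le_add_left 1 n), Cnk_self_sub_one (Nat.add_one_ne_zero n)]
      simp
  rw [hF, mul_left_comm, ← map_ofNat PowerSeries.C 2, PowerSeries.one_sub_C_mul_X_mul_mk_pow,
    mul_one]
end

section
/- Let a, b, c be positive integers and n = a + b + c. Then ind((a,b,c), (n)) = gcd(a+b, b+c) − 1, where (a,b,c) is the three-part composition of n and (n) is the one-part composition of n. -/
open scoped Classical

/-- The composition of `n` with the given list of positive parts. -/
def compOfList (n : ℕ) (l : List ℕ) (hpos : ∀ x ∈ l, 0 < x) (hsum : l.sum = n) :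
    Composition n :=
  ⟨l, fun hi => hpos _ hi, hsum⟩


/-!
Label a vertex `v` (counted from `0`) of `M((a,b,c) | (n))` by its residue modulo
`g = gcd(a+b, b+c)`. Every edge `{v, w}` satisfies `v + w + 1 ≡ a (mod g)`, so a component only
meets the labels `r` and `a - 1 - r`. Conversely, a bottom edge followed by a top edge is the
rotation `v ↦ v + (a+b)` of the circle `ℤ/(a+2b+c)`, once the `b` extra points of that circle are
glued onto the middle block; as `gcd(a+b, a+2b+c) = g`, all vertices with the same label are
connected. So the components are the orbits `{r, a-1-r}` of `ZMod g`. A component is a path iff it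
contains an end vertex, i.e. a `v` with `2v + 1 ∈ {a, 2a+b, 2a+2b+c, a+b+c}`; such a `v` has a
fixed label `r = a-1-r`, and a parity argument shows that every fixed label is attained. Counting
orbits gives `2C + P = g`.
-/

open SimpleGraph

lemma SimpleGraph.Reachable.apply_eq_of_forall_adj {V β : Type*} {G : SimpleGraph V} {f : V → β}
    (hf : ∀ v w, G.Adj v w → f v = f w) {v w : V} (h : G.Reachable v w) : f v = f w := by
  obtain ⟨p⟩ := h
  induction p with
  | nil => rfl
  | cons hadj _ ih => exact (hf _ _ hadj).trans ih

lemma ZMod.exists_natCast_add_mul_eq {m s x y : ℕ} (h : x ≡ y [MOD s.gcd m]) :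
    ∃ k : ZMod m, (x : ZMod m) + k * s = y := by
  obtain ⟨q, hq⟩ := Nat.modEq_iff_dvd.1 h
  refine ⟨((Nat.gcdA s m * q : ℤ) : ZMod m), ?_⟩
  have hyx : (y : ℤ) = x + Nat.gcdA s m * q * s + m * (Nat.gcdB s m * q) := by
    linear_combination hq + q * Nat.gcd_eq_gcd_ab s m
  have := congrArg (Int.cast : ℤ → ZMod m) hyx
  push_cast [ZMod.natCast_self] at this ⊢
  rw [this]
  ring

lemma ZMod.natCast_eq_sub_sub_of_add_add_one_eq {d e x y a : ℕ} (hd : d ∣ e)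
    (h : x + y + 1 = a + e) : (y : ZMod d) = a - 1 - x := by
  have := congrArg (Nat.cast : ℕ → ZMod d) h
  push_cast [(ZMod.natCast_eq_zero_iff e d).2 hd] at this
  linear_combination this

lemma Int.modEq_zero_or_modEq_or_modEq_of_gcd_dvd {p q : ℕ} {t : ℤ} (h : (p.gcd q : ℤ) ∣ t) :
    t ≡ 0 [ZMOD 2 * p.gcd q] ∨ t ≡ p [ZMOD 2 * p.gcd q] ∨ t ≡ q [ZMOD 2 * p.gcd q] := by
  obtain ⟨s, rfl⟩ := h
  simp only [Int.modEq_iff_dvd]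
  rcases Int.even_or_odd s with ⟨k, rfl⟩ | ⟨k, rfl⟩
  · exact .inl ⟨-k, by ring⟩
  obtain ⟨p', hp⟩ := Nat.gcd_dvd_left p q
  obtain ⟨q', hq⟩ := Nat.gcd_dvd_right p q
  rcases Nat.even_or_odd p' with ⟨i, rfl⟩ | ⟨i, rfl⟩
  · rcases Nat.even_or_odd q' with ⟨j, rfl⟩ | ⟨j, rfl⟩
    · have hg : 2 * p.gcd q ∣ p.gcd q :=
        Nat.dvd_gcd ⟨i, hp.trans (by ring)⟩ ⟨j, hq.trans (by ring)⟩
      have : p.gcd q = 0 := by have := Nat.dvd_antisymm hg (Dvd.intro_left 2 rfl); omega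
      exact .inl ⟨0, by simp [this]⟩
    · exact .inr (.inr ⟨j - k, by rw [congrArg (Nat.cast : ℕ → ℤ) hq]; push_cast; ring⟩)
  · exact .inr (.inl ⟨i - k, by rw [congrArg (Nat.cast : ℕ → ℤ) hp]; push_cast; ring⟩)

lemma Nat.card_eq_two_mul_card_add_card_of_fibers {α β : Type*} [Finite α] {f : α → β}
    (hf : Function.Surjective f) (σ : α → α) (hfib : ∀ x y, f x = f y ↔ y = x ∨ y = σ x)
    (P : β → Prop) (hP : ∀ x, P (f x) ↔ σ x ≠ x) :
    Nat.card α = 2 * Nat.card {y // P y} + Nat.card {y // ¬ P y} := by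
  classical
  have : Finite β := Finite.of_surjective f hf
  have := Fintype.ofFinite α
  have := Fintype.ofFinite β
  have hfiber : ∀ y, (Finset.univ.filter fun x => f x = y).card = if P y then 2 else 1 := by
    intro y
    obtain ⟨x, rfl⟩ := hf y
    have : (Finset.univ.filter fun x' => f x' = f x) = {x, σ x} := by
      ext x'
      simp only [Finset.mem_filter, Finset.mem_univ, true_and, Finset.mem_insert,
        Finset.mem_singleton]
      rw [eq_comm, hfib]
    by_cases hx : σ x = x
    · simp [this, hx, (hP x).not_left.2 hx]
    · rw [this, Finset.card_pair (Ne.symm hx), if_pos ((hP x).2 hx)]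
  rw [Nat.card_eq_fintype_card, ← Finset.card_univ,
    Finset.card_eq_sum_card_fiberwise (t := Finset.univ) (fun x _ => Finset.mem_univ (f x)),
    Finset.sum_congr rfl fun y _ => hfiber y, Finset.sum_ite, Finset.sum_const, Finset.sum_const,
    Nat.card_eq_fintype_card, Nat.card_eq_fintype_card, Fintype.card_subtype, Fintype.card_subtype]
  simp [mul_comm]

lemma compEdge_iff {n : ℕ} (t : Composition n) (j k : Fin n) :
    CompEdge t j k ↔ j ≠ k ∧ ∃ i : Fin t.length,
      t.sizeUpTo i ≤ j ∧ t.sizeUpTo i ≤ k ∧ (j : ℕ) + k + 1 = 2 * t.sizeUpTo i + t.blocksFun i := by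
  refine and_congr_right fun _ => exists_congr fun i => ?_
  have := t.sizeUpTo_succ' i
  omega

lemma compEdge_iff_of_blocks_eq_single {n : ℕ} {u : Composition n} (hu : u.blocks = [n])
    (j k : Fin n) : CompEdge u j k ↔ j ≠ k ∧ k = j.rev := by
  obtain ⟨blocks, _, _⟩ := u
  subst hu
  rw [compEdge_iff]
  refine and_congr_right fun _ => ?_
  change (∃ i : Fin 1, _) ↔ _
  simp only [Composition.sizeUpTo, Fin.val_eq_zero, List.take_zero, List.sum_nil, zero_le,
    mul_zero, Composition.blocksFun, List.get_eq_getElem, List.length_cons, List.length_nil,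
    Nat.reduceAdd, List.getElem_cons_zero, zero_add, true_and, exists_const, Fin.ext_iff,
    Fin.val_rev]
  omega

lemma exists_compEdge_iff_of_blocks_eq_single {n : ℕ} {u : Composition n} (hu : u.blocks = [n])
    (v : Fin n) : (∃ w, CompEdge u v w) ↔ v ≠ v.rev := by
  simp only [compEdge_iff_of_blocks_eq_single hu, exists_eq_right]

section ThreeParts

variable {a b c : ℕ} {t : Composition (a + b + c)}

lemma compEdge_iff_of_blocks_eq_three (ht : t.blocks = [a, b, c]) (j k : Fin (a + b + c)) :
    CompEdge t j k ↔ j ≠ k ∧ ((j : ℕ) + k + 1 = a ∨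
      a ≤ j ∧ a ≤ k ∧ (j : ℕ) + k + 1 = 2 * a + b ∨
      a + b ≤ j ∧ a + b ≤ k ∧ (j : ℕ) + k + 1 = 2 * a + 2 * b + c) := by
  obtain ⟨blocks, _, _⟩ := t
  subst ht
  rw [compEdge_iff]
  refine and_congr_right fun _ => ?_
  change (∃ i : Fin 3, _) ↔ _
  simp only [Composition.sizeUpTo, Composition.blocksFun, List.get_eq_getElem, List.length_cons,
    List.length_nil, Nat.reduceAdd, Fin.exists_fin_succ, Fin.isValue, Fin.coe_ofNat_eq_mod,
    Nat.zero_mod, List.take_zero, List.sum_nil, zero_le, mul_zero, List.getElem_cons_zero,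
    zero_add, true_and, Fin.val_succ, List.take_succ_cons, List.sum_cons, List.getElem_cons_succ,
    add_zero, Fin.val_eq_zero, exists_const]
  omega

lemma exists_compEdge_iff_of_blocks_eq_three (ht : t.blocks = [a, b, c]) (v : Fin (a + b + c)) :
    (∃ w, CompEdge t v w) ↔ 2 * (v : ℕ) + 1 ≠ a ∧ 2 * (v : ℕ) + 1 ≠ 2 * a + b ∧
      2 * (v : ℕ) + 1 ≠ 2 * a + 2 * b + c := by
  simp only [compEdge_iff_of_blocks_eq_three ht, ne_eq, Fin.ext_iff]
  refine ⟨fun ⟨w, h⟩ => by omega, fun h => ?_⟩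
  have := v.isLt
  rcases lt_or_ge (v : ℕ) a with h₁ | h₁
  · exact ⟨⟨a - 1 - v, by omega⟩, by simp only; omega⟩
  rcases lt_or_ge (v : ℕ) (a + b) with h₂ | h₂
  · exact ⟨⟨2 * a + b - 1 - v, by omega⟩, by simp only; omega⟩
  · exact ⟨⟨2 * a + 2 * b + c - 1 - v, by omega⟩, by simp only; omega⟩

end ThreeParts

namespace Meander

variable {n : ℕ} {t u : Composition n}

lemma reachable_of_top {j k : Fin n} (h : j ≠ k → CompEdge t j k) : (Meander t u).Reachable j k := by
  rcases eq_or_ne j k with rfl | hne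
  · rfl
  · exact Adj.reachable (G := Meander t u) (Or.inl (h hne))

lemma reachable_rev (hu : u.blocks = [n]) (v : Fin n) : (Meander t u).Reachable v v.rev := by
  rcases eq_or_ne v v.rev with h | hne
  · exact h ▸ .refl v
  · exact Adj.reachable (G := Meander t u)
      (Or.inr ((compEdge_iff_of_blocks_eq_single hu _ _).2 ⟨hne, rfl⟩))

lemma reachable_of_compEdge_rev (hu : u.blocks = [n]) {v w : Fin n}
    (h : v.rev ≠ w → CompEdge t v.rev w) : (Meander t u).Reachable v w :=
  (reachable_rev hu v).trans (reachable_of_top h)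

end Meander

/-- The circle `ZMod (a + 2b + c)` with its points `a+b+c, …, a+2b+c-1` glued onto the middle
block `a, …, a+b-1`: on it, a bottom edge followed by a top edge is the rotation by `a + b`. -/
def foldVertex (a b c : ℕ) [NeZero (a + 2 * b + c)] (z : ZMod (a + 2 * b + c)) : Fin (a + b + c) :=
  if h : z.val < a + b + c then ⟨z.val, h⟩ else ⟨z.val - (b + c), by have := z.val_lt; omega⟩

lemma foldVertex_natCast {a b c : ℕ} [NeZero (a + 2 * b + c)] (v : Fin (a + b + c)) :
    foldVertex a b c (v : ℕ) = v := by
  have hv : (v : ℕ) < a + 2 * b + c := by omega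
  simp [foldVertex, ZMod.val_natCast, Nat.mod_eq_of_lt hv]

namespace Meander

variable {a b c d : ℕ} {t u : Composition (a + b + c)}

lemma reachable_foldVertex_add (ht : t.blocks = [a, b, c]) (hu : u.blocks = [a + b + c])
    [NeZero (a + 2 * b + c)] (z : ZMod (a + 2 * b + c)) :
    (Meander t u).Reachable (foldVertex a b c z) (foldVertex a b c (z + (a + b : ℕ))) := by
  have hz := z.val_lt
  have hw := (z + (a + b : ℕ)).val_lt
  have hval : (z + (a + b : ℕ)).val = z.val + (a + b) ∨
      (z + (a + b : ℕ)).val + (a + 2 * b + c) = z.val + (a + b) := by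
    rw [ZMod.val_add, ZMod.val_natCast, Nat.add_mod_mod]
    rcases lt_or_ge (z.val + (a + b)) (a + 2 * b + c) with h | h
    · exact .inl (Nat.mod_eq_of_lt h)
    · right
      rw [Nat.mod_eq_sub_mod h, Nat.mod_eq_of_lt (by omega)]
      omega
  unfold foldVertex
  split_ifs with h₁ h₂ h₂
  -- Off the glued points, where both sides coincide, the right side is the top partner of the
  -- bottom partner of the left side.
  all_goals first
    | exact reachable_of_compEdge_rev hu fun hne =>
        (compEdge_iff_of_blocks_eq_three ht _ _).2 ⟨hne, by simp only [Fin.val_rev]; omega⟩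
    | (convert Reachable.refl _ using 2; omega)

lemma reachable_foldVertex_add_mul (ht : t.blocks = [a, b, c]) (hu : u.blocks = [a + b + c])
    [NeZero (a + 2 * b + c)] (z k : ZMod (a + 2 * b + c)) :
    (Meander t u).Reachable (foldVertex a b c z) (foldVertex a b c (z + k * (a + b : ℕ))) := by
  rw [← ZMod.natCast_zmod_val k]
  induction k.val with
  | zero => simp
  | succ i ih =>
    rw [Nat.cast_succ, add_one_mul, ← add_assoc]
    exact ih.trans (reachable_foldVertex_add ht hu _)

lemma reachable_of_modEq (ht : t.blocks = [a, b, c]) (hu : u.blocks = [a + b + c])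
    {v w : Fin (a + b + c)} (h : (v : ℕ) ≡ w [MOD (a + b).gcd (b + c)]) :
    (Meander t u).Reachable v w := by
  have : NeZero (a + 2 * b + c) := ⟨by have := t.blocks_pos (i := a) (by simp [ht]); omega⟩
  rw [← Nat.gcd_add_self_right, show b + c + (a + b) = a + 2 * b + c by ring] at h
  obtain ⟨k, hk⟩ := ZMod.exists_natCast_add_mul_eq h
  simpa only [hk, foldVertex_natCast] using reachable_foldVertex_add_mul ht hu (v : ℕ) k

lemma natCast_eq_sub_sub_of_adj (ht : t.blocks = [a, b, c]) (hu : u.blocks = [a + b + c])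
    (hd₁ : d ∣ a + b) (hd₂ : d ∣ b + c) {v w : Fin (a + b + c)} (h : (Meander t u).Adj v w) :
    ((w : ℕ) : ZMod d) = a - 1 - (v : ℕ) := by
  obtain ⟨e, hde, he⟩ : ∃ e, d ∣ e ∧ (v : ℕ) + w + 1 = a + e := by
    rcases h with h | h
    · rw [compEdge_iff_of_blocks_eq_three ht] at h
      rcases h.2 with h | h | h
      · exact ⟨0, dvd_zero d, by omega⟩
      · exact ⟨a + b, hd₁, by omega⟩
      · exact ⟨a + b + (b + c), dvd_add hd₁ hd₂, by omega⟩
    · obtain ⟨-, rfl⟩ := (compEdge_iff_of_blocks_eq_single hu _ _).1 h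
      exact ⟨b + c, hd₂, by simp only [Fin.val_rev]; omega⟩
  exact ZMod.natCast_eq_sub_sub_of_add_add_one_eq hde he

lemma natCast_eq_or_eq_sub_sub_of_reachable (ht : t.blocks = [a, b, c])
    (hu : u.blocks = [a + b + c]) (hd₁ : d ∣ a + b) (hd₂ : d ∣ b + c) {v w : Fin (a + b + c)}
    (h : (Meander t u).Reachable v w) :
    ((w : ℕ) : ZMod d) = v ∨ ((w : ℕ) : ZMod d) = a - 1 - (v : ℕ) := by
  let pair : Fin (a + b + c) → Sym2 (ZMod d) := fun x => s(((x : ℕ) : ZMod d), a - 1 - (x : ℕ))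
  have hpair : pair v = pair w := h.apply_eq_of_forall_adj fun x y hxy => by
    have hy := natCast_eq_sub_sub_of_adj ht hu hd₁ hd₂ hxy
    simp only [pair, hy, Sym2.eq_swap (a := ((x : ℕ) : ZMod d)), sub_sub_cancel]
  rcases Sym2.eq_iff.1 hpair with ⟨hvw, -⟩ | ⟨-, hw⟩
  · exact .inl hvw.symm
  · exact .inr hw.symm

lemma reachable_iff (ht : t.blocks = [a, b, c]) (hu : u.blocks = [a + b + c])
    (v w : Fin (a + b + c)) : (Meander t u).Reachable v w ↔
      ((w : ℕ) : ZMod ((a + b).gcd (b + c))) = v ∨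
      ((w : ℕ) : ZMod ((a + b).gcd (b + c))) = a - 1 - (v : ℕ) := by
  refine ⟨natCast_eq_or_eq_sub_sub_of_reachable ht hu (Nat.gcd_dvd_left _ _)
    (Nat.gcd_dvd_right _ _), ?_⟩
  have hrev : ((v.rev : ℕ) : ZMod ((a + b).gcd (b + c))) = a - 1 - (v : ℕ) :=
    ZMod.natCast_eq_sub_sub_of_add_add_one_eq (Nat.gcd_dvd_right _ _)
      (by simp only [Fin.val_rev]; omega)
  rintro (h | h)
  · exact reachable_of_modEq ht hu ((ZMod.natCast_eq_natCast_iff _ _ _).1 h).symm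
  · rw [← hrev] at h
    exact (reachable_rev hu v).trans
      (reachable_of_modEq ht hu ((ZMod.natCast_eq_natCast_iff _ _ _).1 h).symm)

lemma natCast_eq_sub_sub_self_of_not_exists (ht : t.blocks = [a, b, c])
    (hu : u.blocks = [a + b + c]) (hd₁ : d ∣ a + b) (hd₂ : d ∣ b + c) {v : Fin (a + b + c)}
    (h : ¬((∃ w, CompEdge t v w) ∧ ∃ w, CompEdge u v w)) :
    ((v : ℕ) : ZMod d) = a - 1 - (v : ℕ) := by
  simp only [exists_compEdge_iff_of_blocks_eq_three ht, exists_compEdge_iff_of_blocks_eq_single hu,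
    ne_eq, Fin.ext_iff, Fin.val_rev] at h
  obtain ⟨e, hde, he⟩ : ∃ e, d ∣ e ∧ (v : ℕ) + v + 1 = a + e := by
    by_cases h₁ : 2 * (v : ℕ) + 1 = a
    · exact ⟨0, dvd_zero d, by omega⟩
    by_cases h₂ : 2 * (v : ℕ) + 1 = 2 * a + b
    · exact ⟨a + b, hd₁, by omega⟩
    by_cases h₃ : 2 * (v : ℕ) + 1 = 2 * a + 2 * b + c
    · exact ⟨a + b + (b + c), dvd_add hd₁ hd₂, by omega⟩
    · exact ⟨b + c, hd₂, by omega⟩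
  exact ZMod.natCast_eq_sub_sub_of_add_add_one_eq hde he

lemma exists_natCast_eq_and_not_exists (ht : t.blocks = [a, b, c]) (hu : u.blocks = [a + b + c])
    {x : ℕ} (hx : (a : ZMod ((a + b).gcd (b + c))) - 1 - x = x) :
    ∃ v : Fin (a + b + c), ((v : ℕ) : ZMod ((a + b).gcd (b + c))) = x ∧
      ¬((∃ w, CompEdge t v w) ∧ ∃ w, CompEdge u v w) := by
  have ha : 0 < a := t.blocks_pos (by simp [ht])
  have hdvd : ((a + b).gcd (b + c) : ℤ) ∣ 2 * x + 1 - a := by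
    have : ((2 * x + 1 : ℕ) : ZMod ((a + b).gcd (b + c))) = a := by
      push_cast
      linear_combination -hx
    simpa using Nat.modEq_iff_dvd.1 ((ZMod.natCast_eq_natCast_iff _ _ _).1 this).symm
  obtain ⟨e, he, hmod⟩ : ∃ e : ℕ, (e = 0 ∨ e = a + b ∨ e = b + c) ∧
      (2 * (a + b).gcd (b + c) : ℤ) ∣ 2 * x + 1 - a - e := by
    rcases Int.modEq_zero_or_modEq_or_modEq_of_gcd_dvd hdvd with h | h | h
    · exact ⟨0, .inl rfl, by simpa using h.symm.dvd⟩
    · exact ⟨a + b, .inr (.inl rfl), h.symm.dvd⟩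
    · exact ⟨b + c, .inr (.inr rfl), h.symm.dvd⟩
  have h2 : (2 : ℤ) ∣ 2 * x + 1 - a - e := (Dvd.intro _ rfl).trans hmod
  refine ⟨⟨(a + e - 1) / 2, by omega⟩, ?_, ?_⟩
  · refine (ZMod.natCast_eq_natCast_iff _ _ _).2 (Nat.modEq_iff_dvd.2 ?_)
    refine Int.dvd_of_mul_dvd_mul_left two_ne_zero ?_
    convert hmod using 1
    dsimp only
    omega
  · simp only [exists_compEdge_iff_of_blocks_eq_three ht,
      exists_compEdge_iff_of_blocks_eq_single hu, ne_eq, Fin.ext_iff, Fin.val_rev]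
    omega

lemma isCycleComp_connectedComponentMk_iff (ht : t.blocks = [a, b, c])
    (hu : u.blocks = [a + b + c]) (v : Fin (a + b + c)) :
    IsCycleComp t u ((Meander t u).connectedComponentMk v) ↔
      (a : ZMod ((a + b).gcd (b + c))) - 1 - (v : ℕ) ≠ (v : ℕ) := by
  constructor
  · intro hcyc hv
    obtain ⟨w, hwv, hw⟩ := exists_natCast_eq_and_not_exists ht hu hv
    exact hw (hcyc w (ConnectedComponent.eq.2 ((reachable_iff ht hu w v).2 (.inl hwv.symm))))
  · intro hv w hw
    by_contra hmissing
    have hwfix := natCast_eq_sub_sub_self_of_not_exists ht hu (Nat.gcd_dvd_left _ _)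
      (Nat.gcd_dvd_right _ _) hmissing
    apply hv
    rcases (reachable_iff ht hu w v).1 (ConnectedComponent.eq.1 hw) with h | h
    · rw [h]
      exact hwfix.symm
    · linear_combination -2 * h + hwfix

lemma two_mul_cycleCount_add_pathCount (ht : t.blocks = [a, b, c]) (hu : u.blocks = [a + b + c]) :
    2 * cycleCount t u + pathCount t u = (a + b).gcd (b + c) := by
  have ha : 0 < a := t.blocks_pos (by simp [ht])
  have : NeZero ((a + b).gcd (b + c)) := ⟨(Nat.gcd_pos_of_pos_left _ (by omega)).ne'⟩
  have hgn : (a + b).gcd (b + c) ≤ a + b + c := (Nat.gcd_le_left _ (by omega)).trans (by omega)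
  let vertex (r : ZMod ((a + b).gcd (b + c))) : Fin (a + b + c) := ⟨r.val, r.val_lt.trans_le hgn⟩
  have hvertex (r : ZMod ((a + b).gcd (b + c))) : ((vertex r : ℕ) : ZMod _) = r :=
    ZMod.natCast_zmod_val r
  symm
  rw [← Nat.card_zmod ((a + b).gcd (b + c))]
  refine Nat.card_eq_two_mul_card_add_card_of_fibers
    (f := fun r => (Meander t u).connectedComponentMk (vertex r)) ?_ (fun r => a - 1 - r) ?_
    (IsCycleComp t u) fun r => by rw [isCycleComp_connectedComponentMk_iff ht hu, hvertex]
  · refine ConnectedComponent.ind fun v => ⟨(v : ℕ), ?_⟩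
    refine ConnectedComponent.eq.2 ((reachable_iff ht hu _ _).2 (.inl ?_))
    rw [hvertex]
  · intro r s
    rw [ConnectedComponent.eq, reachable_iff ht hu, hvertex, hvertex]

end Meander

theorem index_three_part_parabolic (a b c : ℕ) (ha : 0 < a) (hb : 0 < b) (hc : 0 < c) :
    seaweedInd
      (compOfList (a + b + c) [a, b, c]
        (by intro x hx; simp at hx; rcases hx with rfl | rfl | rfl <;> assumption)
        (by simp [add_assoc]))
      (compOfList (a + b + c) [a + b + c] (by intro x hx; simp at hx; omega) (by simp)) =
    Nat.gcd (a + b) (b + c) - 1 := by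
  rw [seaweedInd, Meander.two_mul_cycleCount_add_pathCount rfl rfl]
end
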